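/- Let T_C be a complete binary tree with left subtree T_C' and right subtree T_C''. Then the set of successive leaf transitions satisfies S(T_C) = S(T_C') ∪ S(T_C'') ∪ (B_r(T_C') × B_l(T_C'')). -/

import Mathlib

/-- Full binary trees: every vertex has 0 or 2 children. -/
inductive FBT where
  | leaf : FBT
  | node : FBT → FBT → FBT
deriving DecidableEq

namespace FBT

/-- Depth of a full binary tree. -/
def depth : FBT → ℕ
  | leaf => 0
  | node a b => max a.depth b.depth + 1

/-- Positions (reversed root-paths: head is the edge nearest the vertex) of the
leaves of `T`, in left-to-right order. -/
def leaves : FBT → List (List Bool)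
  | leaf => [[]]
  | node a b => a.leaves.map (· ++ [false]) ++ b.leaves.map (· ++ [true])

/-- Total number of vertices. -/
def numNodes : FBT → ℕ
  | leaf => 1
  | node a b => a.numNodes + b.numNodes + 1

/-- Number of internal (non-leaf) vertices. -/
def internals : FBT → ℕ
  | leaf => 0
  | node a b => a.internals + b.internals + 1

/-- The recursive probability function π of the stick-breaking prior:
`pi l T pos` where `pos` is the (reversed) position of the root of `T`. -/
def pi (l : List Bool → ℝ) : FBT → List Bool → ℝ
  | leaf, pos => l pos
  | node a b, pos => (1 - l pos) * pi l a (false :: pos) * pi l b (true :: pos)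

/-- Probability of an internal tree: `p(T) = π(root)`. -/
def pTree (l : List Bool → ℝ) (T : FBT) : ℝ := pi l T []

/-- The memoized value m̃, with `m̃(parent(root)) = 1`. -/
noncomputable def mt (l : List Bool → ℝ) : List Bool → ℝ
  | [] => 1 - l []
  | (b :: p) => Real.sqrt (mt l p) * (1 - l (b :: p))

/-- The memoized value m at a vertex: `m(v) = m̃(parent v)^(1/2) · l v`. -/
noncomputable def mleaf (l : List Bool → ℝ) : List Bool → ℝ
  | [] => l []
  | (b :: p) => Real.sqrt (mt l p) * l (b :: p)

/-- `m̃(parent v)`, with the convention `m̃(parent root) = 1`. -/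
noncomputable def mparent (l : List Bool → ℝ) : List Bool → ℝ
  | [] => 1
  | (_ :: p) => mt l p

/-- The set of internal trees of the complete binary tree of depth `D`,
i.e. full binary trees of depth at most `D`. -/
def trees : ℕ → Finset FBT
  | 0 => {leaf}
  | (D+1) => insert leaf ((trees D ×ˢ trees D).image (fun p => node p.1 p.2))

/-- Consecutive-leaf pairs of a single tree. -/
def transitions (T : FBT) : Finset (List Bool × List Bool) :=
  (T.leaves.zip T.leaves.tail).toFinset

/-- The set `S(T_C)` of successive leaf transitions of the complete binary
tree of depth `D`. -/
def S (D : ℕ) : Finset (List Bool × List Bool) := (trees D).biUnion transitions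

/-- The left boundary of the complete binary tree of depth `D`. -/
def Bl (D : ℕ) : Finset (List Bool) :=
  (Finset.range (D+1)).image (fun k => List.replicate k false)

/-- The right boundary of the complete binary tree of depth `D`. -/
def Br (D : ℕ) : Finset (List Bool) :=
  (Finset.range (D+1)).image (fun k => List.replicate k true)

/-- The marginalisation dynamic-programming table (indexed from `n = 1`). -/
def M (S : Finset (List Bool × List Bool)) (Bl : Finset (List Bool))
    (w : ℕ → List Bool → ℝ) (mw : List Bool → ℝ) : ℕ → List Bool → ℝ
  | 0, _ => 0
  | 1, v => if v ∈ Bl then w 1 v * mw v else 0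
  | (n+2), v => w (n+2) v * mw v *
      ∑ p ∈ S.filter (fun p => p.2 = v), M S Bl w mw (n+1) p.1

/-- The Viterbi-style max-product dynamic-programming table. -/
def Mstar (S : Finset (List Bool × List Bool)) (Bl : Finset (List Bool))
    (w : ℕ → List Bool → NNReal) (mw : List Bool → NNReal) : ℕ → List Bool → NNReal
  | 0, _ => 0
  | 1, v => if v ∈ Bl then w 1 v * mw v else 0
  | (n+2), v => w (n+2) v * mw v *
      (S.filter (fun p => p.2 = v)).sup (fun p => Mstar S Bl w mw (n+1) p.1)

/-- The complete binary tree of depth `D`, as a full binary tree. -/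
def completeTree : ℕ → FBT
  | 0 => leaf
  | (D+1) => node (completeTree D) (completeTree D)

/-! The leaves of `node a b` are those of `a` followed by those of `b`, so the consecutive pairs of
`node a b` are the shifted pairs of `a` and of `b` together with one junction pair: the last leaf
of `a`, which lies on its right boundary, followed by the first leaf of `b`, which lies on its left
boundary. Conversely every pair of boundary vertices of depths `j, k ≤ D` is such a junction pair,
for `node (completeTree j) (completeTree k)`. -/

theorem _root_.List.zip_tail_append {α : Type*} (l₁ l₂ : List α) (h₁ : l₁ ≠ []) (h₂ : l₂ ≠ []) :
    (l₁ ++ l₂).zip (l₁ ++ l₂).tail =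
      l₁.zip l₁.tail ++ (l₁.getLast h₁, l₂.head h₂) :: l₂.zip l₂.tail := by
  induction l₁ with
  | nil => contradiction
  | cons x t ih =>
    cases t with
    | nil => cases l₂ with
      | nil => contradiction
      | cons y s => rfl
    | cons y s =>
      simp only [List.cons_append, List.tail_cons, List.zip_cons_cons] at ih ⊢
      rw [List.getLast_cons (List.cons_ne_nil y s), ih (List.cons_ne_nil y s)]

def leftmostDepth : FBT → ℕ
  | leaf => 0
  | node a _ => a.leftmostDepth + 1

def rightmostDepth : FBT → ℕ
  | leaf => 0
  | node _ b => b.rightmostDepth + 1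

theorem leaves_ne_nil (T : FBT) : T.leaves ≠ [] := by
  induction T with
  | leaf => simp [leaves]
  | node a b iha _ => simp [leaves, iha]

theorem head_leaves (T : FBT) :
    T.leaves.head T.leaves_ne_nil = List.replicate T.leftmostDepth false := by
  induction T with
  | leaf => rfl
  | node a _ iha _ =>
    simp only [leaves]
    rw [List.head_append_of_ne_nil (by simp [leaves_ne_nil]), List.head_map, iha,
      leftmostDepth, List.replicate_succ']

theorem getLast_leaves (T : FBT) :
    T.leaves.getLast T.leaves_ne_nil = List.replicate T.rightmostDepth true := by
  induction T with
  | leaf => rfl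
  | node _ b _ ihb =>
    simp only [leaves]
    rw [List.getLast_append_of_ne_nil (h₂ := by simp [leaves_ne_nil]), List.getLast_map, ihb,
      rightmostDepth, List.replicate_succ']

theorem transitions_leaf : transitions leaf = ∅ := rfl

theorem transitions_node (a b : FBT) :
    transitions (node a b) =
      (transitions a).image (fun p => (p.1 ++ [false], p.2 ++ [false])) ∪
      (transitions b).image (fun p => (p.1 ++ [true], p.2 ++ [true])) ∪
      {(List.replicate a.rightmostDepth true ++ [false],
        List.replicate b.leftmostDepth false ++ [true])} := by
  have hA : a.leaves.map (· ++ [false]) ≠ [] := by simp [leaves_ne_nil]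
  have hB : b.leaves.map (· ++ [true]) ≠ [] := by simp [leaves_ne_nil]
  rw [transitions, leaves, List.zip_tail_append _ _ hA hB, List.getLast_map, List.head_map,
    getLast_leaves, head_leaves, ← List.map_tail, ← List.map_tail, List.zip_map, List.zip_map]
  ext p
  simp only [transitions, List.toFinset_append, List.toFinset_cons, Finset.mem_union,
    Finset.mem_insert, Finset.mem_image, Finset.mem_singleton, List.mem_toFinset, List.mem_map,
    Prod.map, or_assoc]
  exact or_congr_right or_comm

theorem leftmostDepth_le_depth (T : FBT) : T.leftmostDepth ≤ T.depth := by
  induction T with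
  | leaf => rfl
  | node a b iha ihb => simp only [leftmostDepth, depth]; omega

theorem rightmostDepth_le_depth (T : FBT) : T.rightmostDepth ≤ T.depth := by
  induction T with
  | leaf => rfl
  | node a b iha ihb => simp only [rightmostDepth, depth]; omega

theorem depth_completeTree (k : ℕ) : (completeTree k).depth = k := by
  induction k with
  | zero => rfl
  | succ k ih => simp [completeTree, depth, ih]

theorem leftmostDepth_completeTree (k : ℕ) : (completeTree k).leftmostDepth = k := by
  induction k with
  | zero => rfl
  | succ k ih => simp [completeTree, leftmostDepth, ih]

theorem rightmostDepth_completeTree (k : ℕ) : (completeTree k).rightmostDepth = k := by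
  induction k with
  | zero => rfl
  | succ k ih => simp [completeTree, rightmostDepth, ih]

theorem mem_trees {T : FBT} {D : ℕ} : T ∈ trees D ↔ T.depth ≤ D := by
  induction D generalizing T with
  | zero => cases T <;> simp [trees, depth]
  | succ D ih =>
    cases T with
    | leaf => simp [trees, depth]
    | node a b => simp [trees, depth, ih]

theorem image_leftmostDepth_trees (D : ℕ) :
    (trees D).image leftmostDepth = Finset.range (D + 1) := by
  ext k
  simp only [Finset.mem_image, Finset.mem_range, Nat.lt_succ_iff, mem_trees]
  refine ⟨fun ⟨T, hT, hk⟩ => hk ▸ (leftmostDepth_le_depth T).trans hT, fun hk => ?_⟩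
  exact ⟨completeTree k, by rwa [depth_completeTree], leftmostDepth_completeTree k⟩

theorem image_rightmostDepth_trees (D : ℕ) :
    (trees D).image rightmostDepth = Finset.range (D + 1) := by
  ext k
  simp only [Finset.mem_image, Finset.mem_range, Nat.lt_succ_iff, mem_trees]
  refine ⟨fun ⟨T, hT, hk⟩ => hk ▸ (rightmostDepth_le_depth T).trans hT, fun hk => ?_⟩
  exact ⟨completeTree k, by rwa [depth_completeTree], rightmostDepth_completeTree k⟩

theorem Bl_eq_image_trees (D : ℕ) :
    Bl D = (trees D).image (fun T => List.replicate T.leftmostDepth false) := by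
  rw [Bl, ← image_leftmostDepth_trees, Finset.image_image]
  rfl

theorem Br_eq_image_trees (D : ℕ) :
    Br D = (trees D).image (fun T => List.replicate T.rightmostDepth true) := by
  rw [Br, ← image_rightmostDepth_trees, Finset.image_image]
  rfl

theorem node_mem_trees_succ {D : ℕ} {a b : FBT} (ha : a ∈ trees D) (hb : b ∈ trees D) :
    node a b ∈ trees (D + 1) :=
  Finset.mem_insert_of_mem (Finset.mem_image.2 ⟨(a, b), Finset.mem_product.2 ⟨ha, hb⟩, rfl⟩)

theorem transitions_node_subset_S {D : ℕ} {a b : FBT} (ha : a ∈ trees D) (hb : b ∈ trees D) :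
    transitions (node a b) ⊆ S (D + 1) :=
  Finset.subset_biUnion_of_mem transitions (node_mem_trees_succ ha hb)

theorem S_succ (D : ℕ) :
    S (D + 1) = (trees D ×ˢ trees D).biUnion (fun ab => transitions (node ab.1 ab.2)) := by
  rw [S, trees, Finset.biUnion_insert, transitions_leaf, Finset.empty_union, Finset.image_biUnion]

theorem S_succ_subset (D : ℕ) :
    S (D + 1) ⊆
      (S D).image (fun p => (p.1 ++ [false], p.2 ++ [false])) ∪
      (S D).image (fun p => (p.1 ++ [true], p.2 ++ [true])) ∪
      (Br D ×ˢ Bl D).image (fun p => (p.1 ++ [false], p.2 ++ [true])) := by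
  rw [S_succ, Finset.biUnion_subset]
  rintro ⟨a, b⟩ hab
  obtain ⟨ha, hb⟩ := Finset.mem_product.1 hab
  rw [transitions_node, Br_eq_image_trees, Bl_eq_image_trees]
  gcongr
  · exact Finset.subset_biUnion_of_mem _ ha
  · exact Finset.subset_biUnion_of_mem _ hb
  · exact Finset.singleton_subset_iff.2 (Finset.mem_image.2 ⟨(_, _), Finset.mem_product.2
      ⟨Finset.mem_image_of_mem _ ha, Finset.mem_image_of_mem _ hb⟩, rfl⟩)

theorem image_left_S_subset_S_succ (D : ℕ) :
    (S D).image (fun p => (p.1 ++ [false], p.2 ++ [false])) ⊆ S (D + 1) := by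
  refine Finset.image_subset_iff.2 fun q hq => ?_
  obtain ⟨T, hT, hq⟩ := Finset.mem_biUnion.1 hq
  refine transitions_node_subset_S hT hT ?_
  rw [transitions_node]
  exact Finset.mem_union_left _ (Finset.mem_union_left _ (Finset.mem_image_of_mem _ hq))

theorem image_right_S_subset_S_succ (D : ℕ) :
    (S D).image (fun p => (p.1 ++ [true], p.2 ++ [true])) ⊆ S (D + 1) := by
  refine Finset.image_subset_iff.2 fun q hq => ?_
  obtain ⟨T, hT, hq⟩ := Finset.mem_biUnion.1 hq
  refine transitions_node_subset_S hT hT ?_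
  rw [transitions_node]
  exact Finset.mem_union_left _ (Finset.mem_union_right _ (Finset.mem_image_of_mem _ hq))

theorem image_Br_product_Bl_subset_S_succ (D : ℕ) :
    (Br D ×ˢ Bl D).image (fun p => (p.1 ++ [false], p.2 ++ [true])) ⊆ S (D + 1) := by
  refine Finset.image_subset_iff.2 fun q hq => ?_
  rw [Br_eq_image_trees, Bl_eq_image_trees, Finset.mem_product, Finset.mem_image,
    Finset.mem_image] at hq
  obtain ⟨⟨a, ha, hu⟩, ⟨b, hb, hv⟩⟩ := hq
  refine transitions_node_subset_S ha hb ?_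
  rw [transitions_node, hu, hv]
  exact Finset.mem_union_right _ (Finset.mem_singleton_self _)

end FBT

/-- recursive decomposition of the successive leaf transitions,
`S(T_C) = S(T_C') ∪ S(T_C'') ∪ (B_r(T_C') × B_l(T_C''))`, where positions in
the left (right) subtree are embedded by appending a final `false` (`true`). -/
theorem stmt4 (D : ℕ) :
    FBT.S (D + 1) =
      ((FBT.S D).image (fun p => (p.1 ++ [false], p.2 ++ [false]))) ∪
      ((FBT.S D).image (fun p => (p.1 ++ [true], p.2 ++ [true]))) ∪
      ((FBT.Br D ×ˢ FBT.Bl D).image (fun p => (p.1 ++ [false], p.2 ++ [true]))) :=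
  (FBT.S_succ_subset D).antisymm <| Finset.union_subset
    (Finset.union_subset (FBT.image_left_S_subset_S_succ D) (FBT.image_right_S_subset_S_succ D))
    (FBT.image_Br_product_Bl_subset_S_succ D)
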